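/- If the smoothness indicators satisfy I_k = O(h²) and I_k − I_{k'} = O(h^{r+1}) for all k, k' (smooth case), ε = h², and t > 0, then the nonlinear weight ω_k = α_k / Σ_l α_l with α_k = C_k / (ε + I_k)^t satisfies ω_k − C_k = O(h^{r-1}), assuming the linear weights C_k > 0 sum to 1. -/

import Mathlib

/-!
Write `x_l = h² + I_l`. Since `x_l ≥ h²` and `|I_k − I_l| ≤ B h^{r+1}`, every ratio
`x_k / x_l` is within `δ = B h^{r-1}` of `1`, hence (`s ↦ s^t` being Lipschitz near `1`) so is
`x_k^t / x_l^t` up to a constant factor. Multiplying numerator and denominator of `ω_k` by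
`x_k^t` gives `ω_k = C_k / T` with `T = ∑ C_l (x_k / x_l)^t`, a convex combination of numbers
close to `1`, so `|ω_k − C_k| = C_k |1 − T| / T = O(δ)`.
-/

open Finset Filter Topology

lemma abs_rpow_sub_one_le {t s : ℝ} (ht : 0 ≤ t) (hs : |s - 1| ≤ 1 / 2) :
    |s ^ t - 1| ≤ 2 * t * 2 ^ t * |s - 1| := by
  have hmem : ∀ {x : ℝ}, |x - 1| ≤ 1 / 2 → x ∈ Set.Icc (1 / 2 : ℝ) 2 := fun hx => by
    constructor <;> linarith [abs_le.mp hx]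
  have hderiv : ∀ x ∈ Set.Icc (1 / 2 : ℝ) 2,
      HasDerivWithinAt (fun x : ℝ => x ^ t) (t * x ^ (t - 1)) (Set.Icc (1 / 2) 2) x :=
    fun x hx => (Real.hasDerivAt_rpow_const (Or.inl (by linarith [hx.1]))).hasDerivWithinAt
  have hbound : ∀ x ∈ Set.Icc (1 / 2 : ℝ) 2, ‖t * x ^ (t - 1)‖ ≤ 2 * t * 2 ^ t := by
    intro x ⟨hx₁, hx₂⟩
    have hx : 0 < x := by linarith
    have hxt : x ^ t ≤ 2 ^ t := Real.rpow_le_rpow hx.le hx₂ ht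
    have hpow : x ^ (t - 1) ≤ 2 * 2 ^ t := by
      rw [Real.rpow_sub_one hx.ne', div_le_iff₀ hx]
      nlinarith [Real.rpow_nonneg hx.le t]
    rw [Real.norm_eq_abs, abs_of_nonneg (by positivity)]
    nlinarith
  simpa [Real.norm_eq_abs] using (convex_Icc _ _).norm_image_sub_le_of_norm_hasDerivWithin_le
    hderiv hbound (hmem (x := 1) (by norm_num)) (hmem hs)

lemma abs_add_div_add_sub_one_le {e a b D : ℝ} (he : 0 < e) (hb : 0 ≤ b)
    (hab : |a - b| ≤ D * e) : |(e + a) / (e + b) - 1| ≤ D := by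
  have hD : 0 ≤ D := nonneg_of_mul_nonneg_left ((abs_nonneg _).trans hab) he
  have heb : 0 < e + b := by positivity
  rw [div_sub_one heb.ne', add_sub_add_left_eq_sub, abs_div, abs_of_pos heb, div_le_iff₀ heb]
  nlinarith

lemma abs_div_sum_div_sub_le {ι : Type*} [Fintype ι] {C b : ι → ℝ} (hC : ∀ l, 0 ≤ C l)
    (hCsum : ∑ l, C l = 1) {k : ι} {η : ℝ} (hη : η ≤ 1 / 2)
    (hbk : ∀ l, |b k / b l - 1| ≤ η) :
    |C k / b k / ∑ l, C l / b l - C k| ≤ 2 * η := by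
  set T := ∑ l, C l * (b k / b l) with hT
  have hT_sub : |T - 1| ≤ η := by
    calc |T - 1| = |∑ l, C l * (b k / b l - 1)| := by
          simp only [mul_sub, mul_one, sum_sub_distrib, hCsum, hT]
      _ ≤ ∑ l, C l * η := by
          refine (abs_sum_le_sum_abs _ _).trans (sum_le_sum fun l _ => ?_)
          rw [abs_mul, abs_of_nonneg (hC l)]
          exact mul_le_mul_of_nonneg_left (hbk l) (hC l)
      _ = η := by rw [← sum_mul, hCsum, one_mul]
  have hT_half : 1 / 2 ≤ T := by linarith [abs_le.mp hT_sub]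
  have hweight : C k / b k / ∑ l, C l / b l = C k / T := by
    have hTb : T = b k * ∑ l, C l / b l := by
      rw [hT, mul_sum]
      exact sum_congr rfl fun l _ => by ring
    rw [div_div, hTb]
  have hCk : C k ≤ 1 := hCsum ▸ single_le_sum (fun l _ => hC l) (mem_univ k)
  have hTpos : 0 < T := by linarith
  rw [hweight, show C k / T - C k = C k * (1 - T) / T by field_simp, abs_div, abs_mul,
    abs_of_nonneg (hC k), abs_of_pos hTpos, abs_sub_comm, div_le_iff₀ hTpos]
  nlinarith [abs_nonneg (T - 1)]

lemma exists_pos_forall_mul_pow_lt {n : ℕ} (hn : n ≠ 0) (c : ℝ) {ε : ℝ} (hε : 0 < ε) :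
    ∃ h₀ > 0, ∀ h : ℝ, 0 < h → h < h₀ → c * h ^ n < ε := by
  have hlim : Tendsto (fun h : ℝ => c * h ^ n) (𝓝 0) (𝓝 0) := by
    simpa [zero_pow hn] using ((continuous_pow n).const_mul c).tendsto 0
  obtain ⟨h₀, hh₀, hsmall⟩ := Metric.eventually_nhds_iff.mp (hlim.eventually (gt_mem_nhds hε))
  refine ⟨h₀, hh₀, fun h hh hlt => hsmall ?_⟩
  rwa [Real.dist_0_eq_abs, abs_of_pos hh]

theorem nonlinear_weights_accuracy_general {ι : Type*} [Fintype ι]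
    (r : ℕ) (hr : 2 ≤ r) (t : ℝ) (ht : 0 < t)
    (C : ι → ℝ) (hC : ∀ k, 0 < C k) (hCsum : ∑ k, C k = 1)
    (B : ℝ)
    (Ism : ℝ → ι → ℝ)
    (hI0 : ∀ h > (0 : ℝ), ∀ k, 0 ≤ Ism h k)
    (hI2 : ∀ h > (0 : ℝ), ∀ k k', |Ism h k - Ism h k'| ≤ B * h ^ (r + 1)) :
    ∃ M h₀ : ℝ, 0 < h₀ ∧ ∀ h : ℝ, 0 < h → h < h₀ → ∀ k,
      |(C k / (h ^ 2 + Ism h k) ^ t) / (∑ l, C l / (h ^ 2 + Ism h l) ^ t) - C k|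
        ≤ M * h ^ (r - 1) := by
  set K := 2 * t * 2 ^ t
  have hK : 0 ≤ K := by positivity
  obtain ⟨h₀, hh₀, hsmall⟩ :=
    exists_pos_forall_mul_pow_lt (n := r - 1) (by omega) (B * (K + 1)) one_half_pos
  refine ⟨2 * K * B, h₀, hh₀, fun h hh hlt k => ?_⟩
  have hx : ∀ l, 0 < h ^ 2 + Ism h l := fun l => by positivity [hI0 h hh l]
  have hratio : ∀ l, |(h ^ 2 + Ism h k) / (h ^ 2 + Ism h l) - 1| ≤ B * h ^ (r - 1) := fun l =>
    abs_add_div_add_sub_one_le (by positivity) (hI0 h hh l) <| by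
      rw [mul_assoc, ← pow_add, show r - 1 + 2 = r + 1 by omega]
      exact hI2 h hh k l
  have hδ : 0 ≤ B * h ^ (r - 1) := (abs_nonneg _).trans (hratio k)
  have hδ_small : B * h ^ (r - 1) * (K + 1) < 1 / 2 := by linarith [hsmall h hh hlt]
  calc _ ≤ 2 * (K * (B * h ^ (r - 1))) := by
        refine abs_div_sum_div_sub_le (b := fun l => (h ^ 2 + Ism h l) ^ t)
          (fun l => (hC l).le) hCsum (by nlinarith) fun l => ?_
        rw [← Real.div_rpow (hx k).le (hx l).le]
        exact (abs_rpow_sub_one_le ht.le (by nlinarith [hratio l])).trans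
          (mul_le_mul_of_nonneg_left (hratio l) hK)
    _ = 2 * K * B * h ^ (r - 1) := by ring

/-- In the smooth case (`I_k = O(h²)` and `I_k − I_{k'} = O(h^{r+1})`), with `ε = h²`
and `t > 0`, the nonlinear weights satisfy `ω_k − C_k = O(h^{r-1})`: there exist `M`
and `h₀ > 0` such that for all `0 < h < h₀` and all `k`, `|ω_k − C_k| ≤ M·h^{r-1}`. -/
theorem nonlinear_weights_accuracy {ι : Type*} [Fintype ι] [Nonempty ι]
    (r : ℕ) (hr : 2 ≤ r) (t : ℝ) (ht : 0 < t)
    (C : ι → ℝ) (hC : ∀ k, 0 < C k) (hCsum : ∑ k, C k = 1)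
    (A B : ℝ) (hA : 0 < A) (hB : 0 < B)
    (Ism : ℝ → ι → ℝ)
    (hI0 : ∀ h > (0 : ℝ), ∀ k, 0 ≤ Ism h k)
    (hI1 : ∀ h > (0 : ℝ), ∀ k, Ism h k ≤ A * h ^ 2)
    (hI2 : ∀ h > (0 : ℝ), ∀ k k', |Ism h k - Ism h k'| ≤ B * h ^ (r + 1)) :
    ∃ M h₀ : ℝ, 0 < h₀ ∧ ∀ h : ℝ, 0 < h → h < h₀ → ∀ k,
      |(C k / (h ^ 2 + Ism h k) ^ t) / (∑ l, C l / (h ^ 2 + Ism h l) ^ t) - C k|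
        ≤ M * h ^ (r - 1) :=
  nonlinear_weights_accuracy_general r hr t ht C hC hCsum B Ism hI0 hI2
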